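/- arXiv:2107.10717 — 7 statements merged into one kernel-verified Lean document; each statement's English description precedes it below -/
import Mathlib

section
/- The sequence of Catalan numbers (C_n) is not a linear recurrence sequence: there do not exist k ∈ ℕ and constants a_0, ..., a_{k-1} ∈ ℂ such that C_{n+k} = Σ_{j=0}^{k-1} a_j C_{n+j} for all n ≥ 1. -/
open Finset

private lemma zmod2_sq : ∀ a : ZMod 2, a * a = a := by decide

/-- Pairing lemma: symmetric convolution sums in `ZMod 2` reduce to the middle term. -/
private lemma pair_sum (x : ℕ → ZMod 2) (n : ℕ) :
    ∑ i ∈ range (n + 1), x i * x (n - i) =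
      if Even n then x (n / 2) else 0 := by
  by_cases hn : Even n
  · obtain ⟨t, rfl⟩ : ∃ t, n = 2 * t := hn.exists_two_nsmul n
    have hmem : (t : ℕ) ∈ range (2 * t + 1) := Finset.mem_range.mpr (by omega)
    rw [← Finset.sum_erase_add _ _ hmem]
    have h0 : ∑ i ∈ (range (2 * t + 1)).erase t, x i * x (2 * t - i) = 0 := by
      apply Finset.sum_involution (g := fun i _ => 2 * t - i)
      · intro a ha
        have ha' : a ≤ 2 * t := by
          have := Finset.mem_range.mp (Finset.mem_of_mem_erase ha); omega
        have e : 2 * t - (2 * t - a) = a := by omega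
        rw [e, mul_comm]
        exact CharTwo.add_self_eq_zero _
      · intro a ha _
        have h1 : a ≠ t := Finset.ne_of_mem_erase ha
        have ha' : a ≤ 2 * t := by
          have := Finset.mem_range.mp (Finset.mem_of_mem_erase ha); omega
        omega
      · intro a ha
        have h1 : a ≠ t := Finset.ne_of_mem_erase ha
        have ha' : a ≤ 2 * t := by
          have := Finset.mem_range.mp (Finset.mem_of_mem_erase ha); omega
        rw [Finset.mem_erase, Finset.mem_range]
        omega
      · intro a ha
        have ha' : a ≤ 2 * t := by
          have := Finset.mem_range.mp (Finset.mem_of_mem_erase ha); omega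
        omega
    rw [h0, zero_add]
    have e : 2 * t - t = t := by omega
    rw [e, zmod2_sq]
    rw [if_pos (by exact ⟨t, by omega⟩ : Even (2 * t))]
    congr 1
    omega
  · rw [if_neg hn]
    apply Finset.sum_involution (g := fun i _ => n - i)
    · intro a ha
      have ha' : a ≤ n := by have := Finset.mem_range.mp ha; omega
      have e : n - (n - a) = a := by omega
      rw [e, mul_comm]
      exact CharTwo.add_self_eq_zero _
    · intro a ha _
      have ha' : a ≤ n := by have := Finset.mem_range.mp ha; omega
      intro h
      exact hn ⟨a, by omega⟩
    · intro a ha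
      have ha' : a ≤ n := by have := Finset.mem_range.mp ha; omega
      exact Finset.mem_range.mpr (by omega)
    · intro a ha
      have ha' : a ≤ n := by have := Finset.mem_range.mp ha; omega
      omega

open scoped Classical in
/-- Parity of Catalan numbers: `catalan m` is odd iff `m + 1` is a power of two. -/
private lemma catalan_zmod2 : ∀ m : ℕ,
    (catalan m : ZMod 2) = if ∃ s, m + 1 = 2 ^ s then 1 else 0 := by
  intro m
  induction m using Nat.strong_induction_on with
  | _ m ih =>
    match m with
    | 0 =>
      rw [catalan_zero, if_pos ⟨0, rfl⟩, Nat.cast_one]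
    | n + 1 =>
      rw [catalan_succ]
      rw [Fin.sum_univ_eq_sum_range (fun i => catalan i * catalan (n - i))]
      push_cast
      rw [pair_sum (fun i => (catalan i : ZMod 2)) n]
      by_cases hn : Even n
      · rw [if_pos hn]
        obtain ⟨t, rfl⟩ : ∃ t, n = 2 * t := hn.exists_two_nsmul n
        have ht : 2 * t / 2 = t := by omega
        rw [ht, ih t (by omega)]
        have hiff : (∃ s, t + 1 = 2 ^ s) ↔ (∃ s, 2 * t + 1 + 1 = 2 ^ s) := by
          constructor
          · rintro ⟨s, hs⟩; exact ⟨s + 1, by rw [pow_succ]; omega⟩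
          · rintro ⟨s, hs⟩
            match s with
            | 0 => omega
            | s + 1 => exact ⟨s, by rw [pow_succ] at hs; omega⟩
        by_cases h : ∃ s, t + 1 = 2 ^ s
        · rw [if_pos h, if_pos (hiff.mp h)]
        · rw [if_neg h, if_neg (fun hc => h (hiff.mpr hc))]
      · rw [if_neg hn]
        rw [if_neg]
        rintro ⟨s, hs⟩
        rw [Nat.not_even_iff] at hn
        match s with
        | 0 => omega
        | s + 1 =>
          rw [pow_succ] at hs
          omega

private lemma catalan_even_of_not_pow2 {m : ℕ} (h : ¬ ∃ s, m + 1 = 2 ^ s) :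
    (catalan m : ZMod 2) = 0 := by
  classical
  rw [catalan_zmod2 m]
  simp [h]

private lemma catalan_odd_of_pow2 {m s : ℕ} (h : m + 1 = 2 ^ s) :
    (catalan m : ZMod 2) = 1 := by
  classical
  rw [catalan_zmod2 m]
  simp only [if_pos (⟨s, h⟩ : ∃ s, m + 1 = 2 ^ s)]

/-- No integer linear recurrence for Catalan numbers. -/
private lemma no_int_recurrence (k : ℕ) : ∀ (N : ℕ) (E : ℕ → ℤ),
    (E k).natAbs ≤ N → E k ≠ 0 →
    (∀ m : ℕ, ∑ j ∈ range (k + 1), E j * catalan (m + j) = 0) → False := by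
  intro N
  induction N with
  | zero =>
    intro E hle hne _
    exact hne (Int.natAbs_eq_zero.mp (Nat.le_zero.mp hle))
  | succ N ih =>
    intro E hle hne hrec
    by_cases hodd : ∃ j, j ≤ k ∧ Odd (E j)
    · -- parity contradiction
      obtain ⟨j0, hj0k, hj0odd⟩ := hodd
      have hP : k < 2 ^ (k + 1) := lt_of_lt_of_le (Nat.lt_two_pow_self (n := k))
        (Nat.pow_le_pow_right (by norm_num) (by omega))
      have hpow2 : (2 : ℕ) ^ (k + 2) = 2 * 2 ^ (k + 1) := by rw [pow_succ]; ring
      set m : ℕ := 2 ^ (k + 2) - 1 - j0 with hm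
      have hmid : m + j0 + 1 = 2 ^ (k + 2) := by omega
      have hoff : ∀ j ≤ k, j ≠ j0 → ¬ ∃ s, m + j + 1 = 2 ^ s := by
        rintro j hj hne' ⟨s, hs⟩
        have hs1 : k + 1 < s := by
          by_contra h
          have : (2:ℕ) ^ s ≤ 2 ^ (k + 1) := Nat.pow_le_pow_right (by norm_num) (by omega)
          omega
        have hs2 : s < k + 3 := by
          by_contra h
          have h43 : (2:ℕ) ^ (k + 3) ≤ 2 ^ s := Nat.pow_le_pow_right (by norm_num) (by omega)
          have : (2:ℕ) ^ (k + 3) = 2 * (2 * 2 ^ (k + 1)) := by rw [pow_succ, pow_succ]; ring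
          omega
        have hs3 : s = k + 2 := by omega
        subst hs3
        omega
      have h2 := congrArg (fun z : ℤ => (z : ZMod 2)) (hrec m)
      push_cast at h2
      rw [Finset.sum_eq_single j0] at h2
      · rw [catalan_odd_of_pow2 hmid] at h2
        obtain ⟨t, ht⟩ := hj0odd
        rw [ht] at h2
        push_cast at h2
        have h20 : (2 : ZMod 2) = 0 := rfl
        rw [h20] at h2
        simp at h2
      · intro j hj hnej
        rw [Finset.mem_range] at hj
        rw [catalan_even_of_not_pow2 (hoff j (by omega) hnej), mul_zero]
      · intro h
        exact absurd (Finset.mem_range.mpr (by omega)) h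
    · -- all coefficients even: halve them
      push_neg at hodd
      have heven : ∀ j ≤ k, E j % 2 = 0 := by
        intro j hj
        have := hodd j hj
        rw [Int.not_odd_iff_even, Int.even_iff] at this
        exact this
      set E' : ℕ → ℤ := fun j => E j / 2 with hE'
      have hhalf : ∀ j ≤ k, E j = 2 * E' j := by
        intro j hj
        have := heven j hj
        simp only [hE']
        omega
      have hne' : E' k ≠ 0 := by
        intro h
        apply hne
        rw [hhalf k le_rfl, h, mul_zero]
      have hle' : (E' k).natAbs ≤ N := by
        have h1 : (E k).natAbs = 2 * (E' k).natAbs := by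
          rw [hhalf k le_rfl, Int.natAbs_mul]
          norm_num
        have h2 : 1 ≤ (E' k).natAbs := Nat.one_le_iff_ne_zero.mpr
          (fun h => hne' (Int.natAbs_eq_zero.mp h))
        omega
      apply ih E' hle' hne'
      intro n
      have hsum : ∑ j ∈ range (k + 1), E j * (catalan (n + j) : ℤ) =
          2 * ∑ j ∈ range (k + 1), E' j * (catalan (n + j) : ℤ) := by
        rw [Finset.mul_sum]
        apply Finset.sum_congr rfl
        intro j hj
        rw [Finset.mem_range] at hj
        rw [hhalf j (by omega)]
        ring
      have h0 := hrec n
      rw [hsum] at h0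
      omega

/-- A `ℚ`-linear functional on `ℂ` sending `1` to `1`. -/
private lemma exists_phi : ∃ φ : ℂ →ₗ[ℚ] ℚ, φ 1 = 1 := by
  have h1 : (1 : ℂ) ≠ 0 := one_ne_zero
  have hli : LinearIndepOn ℚ id ({(1 : ℂ)} : Set ℂ) :=
    LinearIndepOn.singleton (v := id) h1
  let b := Module.Basis.extend hli
  have hmem : (1 : ℂ) ∈ hli.extend (Set.subset_univ _) := hli.subset_extend _ rfl
  refine ⟨(Finsupp.lapply (⟨(1 : ℂ), hmem⟩ : hli.extend (Set.subset_univ _))).comp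
    b.repr.toLinearMap, ?_⟩
  have h2 : (1 : ℂ) = b ⟨(1 : ℂ), hmem⟩ := (Module.Basis.extend_apply_self hli ⟨(1 : ℂ), hmem⟩).symm
  simp only [LinearMap.comp_apply, LinearEquiv.coe_toLinearMap, Finsupp.lapply_apply]
  have h3 : (b.repr 1) ⟨(1 : ℂ), hmem⟩ = (b.repr (b ⟨(1 : ℂ), hmem⟩)) ⟨(1 : ℂ), hmem⟩ :=
    congrArg (fun v => (b.repr v) ⟨(1 : ℂ), hmem⟩) h2
  rw [h3, Module.Basis.repr_self]
  simp

/-- The Catalan numbers (1-based: C_n = catalan (n-1)) are not a linear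
recurrence sequence: there are no k and complex constants a_0,...,a_{k-1} with
C_{n+k} = Σ_{j<k} a_j C_{n+j} for all n ≥ 1. -/
theorem catalan_not_linear_recurrence :
    ¬ ∃ (k : ℕ) (a : Fin k → ℂ),
      ∀ n : ℕ, 1 ≤ n →
        (catalan (n + k - 1) : ℂ) =
          ∑ j : Fin k, a j * (catalan (n + (j : ℕ) - 1) : ℂ) := by
  rintro ⟨k, a, ha⟩
  obtain ⟨φ, hφ⟩ := exists_phi
  -- rational recurrence
  set b : Fin k → ℚ := fun j => φ (a j) with hb
  have hQ : ∀ m : ℕ, (catalan (m + k) : ℚ) = ∑ j : Fin k, b j * catalan (m + j) := by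
    intro m
    have h := ha (m + 1) (by omega)
    have e1 : m + 1 + k - 1 = m + k := by omega
    rw [e1] at h
    have h2 : ∀ j : Fin k, a j * (catalan (m + 1 + (j : ℕ) - 1) : ℂ)
        = (catalan (m + (j : ℕ)) : ℚ) • a j := by
      intro j
      have e2 : m + 1 + (j : ℕ) - 1 = m + j := by omega
      rw [e2, Rat.smul_def, mul_comm]
      norm_num
    rw [Finset.sum_congr rfl (fun j _ => h2 j)] at h
    have h3 : (catalan (m + k) : ℂ) = (catalan (m + k) : ℚ) • (1 : ℂ) := by
      rw [Rat.smul_def, mul_one]; norm_num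
    rw [h3] at h
    have h4 := congrArg φ h
    rw [map_smul, hφ, smul_eq_mul, mul_one, map_sum] at h4
    rw [h4]
    apply Finset.sum_congr rfl
    intro j _
    rw [map_smul, smul_eq_mul, mul_comm]
  -- clear denominators
  set D : ℕ := ∏ j : Fin k, (b j).den with hD
  have hDpos : 0 < D := Finset.prod_pos (fun j _ => (b j).pos)
  have hint : ∀ j : Fin k, ∃ z : ℤ, (z : ℚ) = (D : ℚ) * b j := by
    intro j
    refine ⟨(b j).num * ∏ i ∈ Finset.univ.erase j, ((b i).den : ℤ), ?_⟩
    have hDsplit : (D : ℚ) = (∏ i ∈ Finset.univ.erase j, ((b i).den : ℚ)) * (b j).den := by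
      rw [hD]
      push_cast
      rw [Finset.prod_erase_mul _ _ (Finset.mem_univ j)]
    have hnum : ((b j).den : ℚ) * b j = (b j).num := by
      rw [mul_comm, Rat.mul_den_eq_num]
    rw [hDsplit]
    push_cast
    rw [mul_assoc, hnum]
    ring
  choose z hz using hint
  classical
  set E : ℕ → ℤ := fun j => if h : j < k then z ⟨j, h⟩ else -(D : ℤ) with hE
  have hEk : E k ≠ 0 := by
    simp only [hE, dif_neg (lt_irrefl k)]
    omega
  apply no_int_recurrence k (E k).natAbs E le_rfl hEk
  intro m
  have key : ((∑ j ∈ range (k + 1), E j * catalan (m + j) : ℤ) : ℚ) = 0 := by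
    push_cast
    rw [Finset.sum_range_succ]
    have hsum : ∑ j ∈ range k, (E j : ℚ) * (catalan (m + j) : ℚ)
        = (D : ℚ) * (catalan (m + k) : ℚ) := by
      rw [← Fin.sum_univ_eq_sum_range (fun j => (E j : ℚ) * (catalan (m + j) : ℚ)) k]
      have hterm : ∀ j : Fin k, (E (j : ℕ) : ℚ) * (catalan (m + (j : ℕ)) : ℚ)
          = (D : ℚ) * (b j * catalan (m + (j : ℕ))) := by
        intro j
        simp only [hE, dif_pos j.isLt]
        rw [show (⟨(j : ℕ), j.isLt⟩ : Fin k) = j from Fin.eta j j.isLt, hz j]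
        ring
      rw [Finset.sum_congr rfl (fun j _ => hterm j), ← Finset.mul_sum, ← hQ m]
    rw [hsum]
    simp only [hE, dif_neg (lt_irrefl k)]
    push_cast
    ring
  exact_mod_cast key
end

section
/- The Catalan number C_n (with C_1 = 1, indexed so that C_n = (1/n)·binom(2n-2,n-1)) is odd if and only if n is a power of 2, i.e., n = 2^m for some m ∈ ℕ. -/
open Finset

private lemma cat_sum_range (n : ℕ) :
    catalan (n + 1) = ∑ i ∈ Finset.range (n + 1), catalan i * catalan (n - i) := by
  rw [catalan_succ, Finset.sum_range fun i => catalan i * catalan (n - i)]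

private lemma odd_iff_zmod (n : ℕ) : Odd n ↔ (n : ZMod 2) = 1 := by
  rw [Nat.odd_iff]
  have h := (ZMod.natCast_mod n 2).symm
  constructor
  · intro h1; rw [h, h1]; rfl
  · intro h1
    rcases Nat.mod_two_eq_zero_or_one n with h0 | h0
    · rw [h, h0] at h1; simp at h1
    · exact h0

private lemma cat_parity_odd (k : ℕ) :
    ((catalan (2 * k + 1) : ZMod 2)) = (catalan k : ZMod 2) := by
  rw [cat_sum_range]
  push_cast
  set f : ℕ → ZMod 2 := fun i => (catalan i : ZMod 2) * (catalan (2 * k - i) : ZMod 2) with hf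
  have hk : k ∈ Finset.range (2 * k + 1) := by simp; omega
  rw [← Finset.add_sum_erase _ f hk]
  have h0 : ∑ i ∈ (Finset.range (2 * k + 1)).erase k, f i = 0 := by
    apply Finset.sum_involution (fun a _ => 2 * k - a)
    · intro a ha
      have ha' : a ≤ 2 * k := by simp [Finset.mem_erase, Finset.mem_range] at ha; omega
      have h1 : 2 * k - (2 * k - a) = a := by omega
      have h2 : f (2 * k - a) = f a := by rw [hf]; simp only [h1]; ring
      rw [h2]
      have hxx : ∀ x : ZMod 2, x + x = 0 := by decide
      exact hxx _
    · intro a ha _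
      simp [Finset.mem_erase, Finset.mem_range] at ha
      omega
    · intro a ha
      simp [Finset.mem_erase, Finset.mem_range] at ha ⊢
      omega
    · intro a ha
      simp [Finset.mem_erase, Finset.mem_range] at ha
      omega
  rw [h0, add_zero, hf]
  simp only [Nat.sub_self]
  have h2 : 2 * k - k = k := by omega
  rw [h2]
  have : ∀ x : ZMod 2, x * x = x := by decide
  exact this _

private lemma cat_parity_even (k : ℕ) :
    ((catalan (2 * k + 2) : ZMod 2)) = 0 := by
  have : 2 * k + 2 = (2 * k + 1) + 1 := rfl
  rw [this, cat_sum_range]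
  push_cast
  apply Finset.sum_involution (fun a _ => 2 * k + 1 - a)
  · intro a ha
    have ha' : a ≤ 2 * k + 1 := by simp [Finset.mem_range] at ha; omega
    have h1 : 2 * k + 1 - (2 * k + 1 - a) = a := by omega
    simp only [h1]
    rw [mul_comm]
    have hxx : ∀ x : ZMod 2, x + x = 0 := by decide
    exact hxx _
  · intro a ha _
    simp [Finset.mem_range] at ha
    omega
  · intro a ha
    simp [Finset.mem_range] at ha ⊢
  · intro a ha
    simp [Finset.mem_range] at ha
    omega

/-- C_n (1-based) is odd iff n is a power of 2; in 0-based mathlib indexing: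
catalan n is odd iff n + 1 is a power of 2. -/
theorem catalan_odd_iff_pow_two (n : ℕ) :
    Odd (catalan n) ↔ ∃ m : ℕ, n + 1 = 2 ^ m := by
  induction n using Nat.strong_induction_on with
  | _ n ih =>
    match n with
    | 0 => simp [catalan_zero]; exact ⟨0, rfl⟩
    | (j + 1) =>
      rcases Nat.even_or_odd j with ⟨k, hk⟩ | ⟨k, hk⟩
      · -- j = 2k, n = 2k+1
        subst hk
        have hj : k + k + 1 = 2 * k + 1 := by ring
        rw [hj, odd_iff_zmod, cat_parity_odd, ← odd_iff_zmod,
          ih k (by omega)]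
        constructor
        · rintro ⟨m, hm⟩
          exact ⟨m + 1, by rw [pow_succ]; omega⟩
        · rintro ⟨m, hm⟩
          match m with
          | 0 => omega
          | m + 1 => exact ⟨m, by rw [pow_succ] at hm; omega⟩
      · -- j = 2k+1, n = 2k+2
        subst hk
        have hj : 2 * k + 1 + 1 = 2 * k + 2 := rfl
        rw [hj, odd_iff_zmod, cat_parity_even]
        constructor
        · intro h; exact absurd h.symm one_ne_zero
        · rintro ⟨m, hm⟩
          match m with
          | 0 => omega
          | m + 1 =>
            rw [pow_succ] at hm
            omega
end

section
/- The generating function Σ_{n≥1} C_n x^n of the Catalan numbers is not a rational power series: it cannot be written as p(x)·q(x)^{-1} in ℂ[[x]] for polynomials p, q with q(0) ≠ 0. -/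
open PowerSeries

noncomputable def catGF : PowerSeries ℂ :=
  PowerSeries.mk fun n : ℕ => if n = 0 then (0 : ℂ) else (catalan (n - 1) : ℂ)

lemma catGF_eq : catGF = PowerSeries.X + catGF * catGF := by
  ext n
  rw [map_add, PowerSeries.coeff_X, PowerSeries.coeff_mul]
  match n with
  | 0 => simp [catGF]
  | 1 => simp [catGF, Finset.Nat.antidiagonal_succ]
  | (n+2) =>
    simp only [catGF, PowerSeries.coeff_mk]
    rw [Finset.Nat.sum_antidiagonal_eq_sum_range_succ_mk]
    rw [Finset.sum_range_succ, Finset.sum_range_succ']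
    have h1 : ∀ k ∈ Finset.range (n+1),
        (if k + 1 = 0 then (0:ℂ) else (catalan (k + 1 - 1) : ℂ)) *
          (if n + 2 - (k + 1) = 0 then (0:ℂ) else (catalan (n + 2 - (k + 1) - 1) : ℂ)) =
        ((catalan k * catalan (n - k) : ℕ) : ℂ) := by
      intro k hk
      simp only [Finset.mem_range] at hk
      rw [if_neg (by omega), if_neg (by omega)]
      have e : n + 2 - (k + 1) - 1 = n - k := by omega
      rw [e]; push_cast; ring
    rw [Finset.sum_congr rfl h1, ← Nat.cast_sum,
      ← Finset.Nat.sum_antidiagonal_eq_sum_range_succ (fun x y => catalan x * catalan y),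
      ← catalan_succ']
    simp

/-- The generating function Σ_{n≥1} C_n xⁿ of the Catalan numbers is not a
rational power series: it is not of the form p(x)·q(x)⁻¹ in ℂ[[x]] with
q(0) ≠ 0. -/
theorem catalan_gf_not_rational :
    ¬ ∃ p q : Polynomial ℂ, q.eval 0 ≠ 0 ∧
      (PowerSeries.mk fun n : ℕ => if n = 0 then (0 : ℂ) else (catalan (n - 1) : ℂ)) =
        (p : PowerSeries ℂ) * (q : PowerSeries ℂ)⁻¹ := by
  rintro ⟨p, q, hq0, h⟩
  have h' : catGF = (p : PowerSeries ℂ) * (q : PowerSeries ℂ)⁻¹ := h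
  have hq : PowerSeries.constantCoeff (q : PowerSeries ℂ) ≠ 0 := by
    rwa [Polynomial.constantCoeff_coe, Polynomial.coeff_zero_eq_eval_zero]
  have hinv : ((q : PowerSeries ℂ))⁻¹ * q = 1 := PowerSeries.inv_mul_cancel _ hq
  have h2 : catGF * (q : PowerSeries ℂ) = (p : PowerSeries ℂ) := by
    rw [h', mul_assoc, hinv, mul_one]
  have key : ((p : Polynomial ℂ) : PowerSeries ℂ) * (q : PowerSeries ℂ) =
      PowerSeries.X * (q : PowerSeries ℂ) ^ 2
        + ((p : Polynomial ℂ) : PowerSeries ℂ) ^ 2 := by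
    calc ((p : Polynomial ℂ) : PowerSeries ℂ) * (q : PowerSeries ℂ) = catGF * (q : PowerSeries ℂ) * (q : PowerSeries ℂ) := by rw [h2]
      _ = catGF * (q : PowerSeries ℂ)^2 := by ring
      _ = (PowerSeries.X + catGF * catGF) * (q : PowerSeries ℂ)^2 := by rw [← catGF_eq]
      _ = PowerSeries.X * (q : PowerSeries ℂ)^2 + (catGF * (q : PowerSeries ℂ)) * (catGF * (q : PowerSeries ℂ)) := by ring
      _ = _ := by rw [h2]; ring
  have hpoly : p * q = Polynomial.X * q ^ 2 + p ^ 2 :=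
    Polynomial.coe_inj.mp (by push_cast; exact key)
  have hqne : q ≠ 0 := fun hq' => hq0 (by simp [hq'])
  set r : Polynomial ℂ := 2 * p - q with hr
  have hsq : r ^ 2 = (1 - 4 * Polynomial.X) * q ^ 2 := by
    rw [hr]; linear_combination -4 * hpoly
  have hlin : (1 - 4 * Polynomial.X : Polynomial ℂ) ≠ 0 := by
    intro hlin
    have := congrArg (fun s => Polynomial.coeff s 1) hlin
    simp [Polynomial.coeff_one] at this
  have hrne : r ≠ 0 := by
    intro hr0
    have hz : (1 - 4 * Polynomial.X) * q ^ 2 = 0 := by rw [← hsq, hr0]; ring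
    exact mul_ne_zero hlin (pow_ne_zero 2 hqne) hz
  have hdeg := congrArg Polynomial.natDegree hsq
  rw [Polynomial.natDegree_pow, Polynomial.natDegree_mul hlin (pow_ne_zero 2 hqne),
    Polynomial.natDegree_pow] at hdeg
  have hd1 : (1 - 4 * Polynomial.X : Polynomial ℂ).natDegree = 1 := by
    compute_degree!
  rw [hd1] at hdeg
  omega
end

section
/- Let K ⊆ L be a field extension and (b_n)_{n≥1} a sequence with values in K satisfying b_{n+k} = Σ_{j=0}^{k-1} a_j b_{n+j} for all n ≥ 1, where the a_j ∈ L. Then there exist k' ≤ k and coefficients a'_0, ..., a'_{k'-1} ∈ K such that b_{n+k'} = Σ_{j=0}^{k'-1} a'_j b_{n+j} for all n ≥ 1. -/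
/-- If a sequence with values in a subfield K of L satisfies a linear
recurrence of order k with coefficients in L, it satisfies a linear recurrence
of order k' ≤ k with coefficients in K. -/
theorem recurrence_descends (K L : Type*) [Field K] [Field L] [Algebra K L]
    (k : ℕ) (b : ℕ → K) (a : Fin k → L)
    (h : ∀ n : ℕ, 1 ≤ n →
      algebraMap K L (b (n + k)) = ∑ j : Fin k, a j * algebraMap K L (b (n + (j : ℕ)))) :
    ∃ k' : ℕ, k' ≤ k ∧ ∃ a' : Fin k' → K,
      ∀ n : ℕ, 1 ≤ n → b (n + k') = ∑ j : Fin k', a' j * b (n + (j : ℕ)) := by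
  classical
  -- the window vectors
  set w : ℕ → (Fin (k + 1) → K) := fun n j => b (n + (j : ℕ)) with hw
  -- embedding K^(k+1) → L^(k+1)
  let ψ : (Fin (k + 1) → K) →ₗ[K] (Fin (k + 1) → L) :=
    LinearMap.pi fun j => (Algebra.linearMap K L).comp (LinearMap.proj j)
  -- the L-linear functional cut out by the recurrence
  let f : (Fin (k + 1) → L) →ₗ[L] L :=
    LinearMap.proj (Fin.last k) - ∑ j : Fin k, a j • LinearMap.proj j.castSucc
  let g : (Fin (k + 1) → K) →ₗ[K] L := (f.restrictScalars K).comp ψ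
  have hg : ∀ n : ℕ, 1 ≤ n → g (w n) = 0 := by
    intro n hn
    simp only [g, f, ψ, LinearMap.comp_apply, LinearMap.restrictScalars_apply,
      LinearMap.sub_apply, LinearMap.sum_apply, LinearMap.smul_apply, LinearMap.proj_apply,
      LinearMap.pi_apply, Algebra.linearMap_apply, smul_eq_mul]
    have := h n hn
    simp only [hw, Fin.val_last, Fin.coe_castSucc]
    rw [this]
    ring
  -- span of windows is a proper subspace
  set W : Submodule K (Fin (k + 1) → K) :=
    Submodule.span K (Set.range fun n : ℕ => w (n + 1)) with hW
  have hWg : W ≤ LinearMap.ker g := by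
    rw [hW, Submodule.span_le]
    rintro x ⟨n, rfl⟩
    exact hg (n + 1) (Nat.le_add_left 1 n)
  have hWne : W ≠ ⊤ := by
    intro htop
    have hker : LinearMap.ker g = ⊤ := top_le_iff.mp (htop ▸ hWg)
    have hg0 : g = 0 := LinearMap.ker_eq_top.mp hker
    have : g (fun i => if i = Fin.last k then (1 : K) else 0) = 1 := by
      simp only [g, f, ψ, LinearMap.comp_apply, LinearMap.restrictScalars_apply,
        LinearMap.sub_apply, LinearMap.sum_apply, LinearMap.smul_apply, LinearMap.proj_apply,
        LinearMap.pi_apply, Algebra.linearMap_apply, smul_eq_mul]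
      have hne : ∀ j : Fin k, j.castSucc ≠ Fin.last k := fun j => (Fin.castSucc_lt_last j).ne
      simp [hne]
    rw [hg0] at this
    simp at this
  -- get a nonzero K-functional vanishing on W
  obtain ⟨φ, hφne, hφW⟩ :=
    Submodule.exists_dual_map_eq_bot_of_lt_top (lt_top_iff_ne_top.mpr hWne) inferInstance
  have hφ0 : ∀ x ∈ W, φ x = 0 := by
    intro x hx
    have : φ x ∈ W.map φ := Submodule.mem_map_of_mem hx
    rwa [hφW, Submodule.mem_bot] at this
  -- extract coefficients
  set c : Fin (k + 1) → K := fun j => φ (fun i => if j = i then 1 else 0) with hc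
  have hφsum : ∀ x : Fin (k + 1) → K, φ x = ∑ j, x j • c j :=
    fun x => LinearMap.pi_apply_eq_sum_univ φ x
  have hcne : ∃ j, c j ≠ 0 := by
    by_contra hall
    push_neg at hall
    apply hφne
    apply LinearMap.ext
    intro x
    simp [hφsum x, hall]
  have hrel : ∀ n : ℕ, 1 ≤ n → ∑ j : Fin (k + 1), c j * b (n + (j : ℕ)) = 0 := by
    intro n hn
    obtain ⟨m, rfl⟩ := Nat.exists_eq_add_of_le hn
    have hmem : w (1 + m) ∈ W :=
      Submodule.subset_span ⟨m, show w (m + 1) = w (1 + m) by rw [Nat.add_comm m 1]⟩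
    have := hφ0 _ hmem
    rw [hφsum] at this
    rw [← this]
    exact Finset.sum_congr rfl fun j _ => by simp [hw, smul_eq_mul, mul_comm]
  -- pass to ℕ-indexed coefficients
  set d : ℕ → K := fun j => if hj : j < k + 1 then c ⟨j, hj⟩ else 0 with hd
  have hrel' : ∀ n : ℕ, 1 ≤ n → ∑ j ∈ Finset.range (k + 1), d j * b (n + j) = 0 := by
    intro n hn
    rw [← Fin.sum_univ_eq_sum_range (fun j => d j * b (n + j)) (k + 1), ← hrel n hn]
    exact Finset.sum_congr rfl fun j _ => by simp [hd, j.isLt, Nat.lt_succ_iff.mp j.isLt]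
  -- maximal index with nonzero coefficient
  set s : Finset ℕ := (Finset.range (k + 1)).filter (fun j => d j ≠ 0) with hs
  have hsne : s.Nonempty := by
    obtain ⟨j, hj⟩ := hcne
    exact ⟨(j : ℕ), by simp [hs, hd, j.isLt, hj, Nat.lt_succ_iff.mp j.isLt]⟩
  set m : ℕ := s.max' hsne with hm
  have hms : m ∈ s := s.max'_mem hsne
  have hmk : m ≤ k := by
    have := Finset.mem_range.mp (Finset.mem_filter.mp hms).1
    omega
  have hdm : d m ≠ 0 := (Finset.mem_filter.mp hms).2
  have hdzero : ∀ j, m < j → d j = 0 := by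
    intro j hj
    by_contra hjne
    rcases lt_or_ge j (k + 1) with hjk | hjk
    · have := Finset.le_max' s j (Finset.mem_filter.mpr ⟨Finset.mem_range.mpr hjk, hjne⟩)
      rw [← hm] at this
      omega
    · exact hjne (by simp [hd, Nat.not_lt.mpr hjk, Nat.not_le.mpr hjk])
  refine ⟨m, hmk, fun j => -d (j : ℕ) / d m, fun n hn => ?_⟩
  have hsum : ∑ j ∈ Finset.range (m + 1), d j * b (n + j) = 0 := by
    rw [← hrel' n hn]
    have hsub : Finset.range (m + 1) ⊆ Finset.range (k + 1) :=
      Finset.range_subset_range.mpr (Nat.succ_le_succ hmk)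
    have hz : ∀ x ∈ Finset.range (k + 1), x ∉ Finset.range (m + 1) → d x * b (n + x) = 0 := by
      intro x _ hx'
      rw [Finset.mem_range] at hx'
      simp [hdzero x (by omega)]
    exact Finset.sum_subset hsub hz
  rw [Finset.sum_range_succ] at hsum
  have key : d m * b (n + m) = ∑ j ∈ Finset.range m, -(d j * b (n + j)) := by
    rw [Finset.sum_neg_distrib]
    linear_combination hsum
  calc b (n + m) = d m * b (n + m) / d m := by field_simp
    _ = (∑ j ∈ Finset.range m, -(d j * b (n + j))) / d m := by rw [key]
    _ = ∑ j ∈ Finset.range m, -(d j * b (n + j)) / d m := Finset.sum_div _ _ _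
    _ = ∑ j : Fin m, -(d (j : ℕ) * b (n + (j : ℕ))) / d m :=
      (Fin.sum_univ_eq_sum_range (fun j => -(d j * b (n + j)) / d m) m).symm
    _ = ∑ j : Fin m, -d (j : ℕ) / d m * b (n + (j : ℕ)) :=
      Finset.sum_congr rfl fun j _ => by ring
end

section
/- If a sequence of integers (b_n) satisfies a linear recurrence b_{n+k} = Σ_{j=0}^{k-1} a_j b_{n+j} for all n with complex coefficients a_j, then it satisfies a linear recurrence of order at most k with rational coefficients. -/
/-- An integer sequence satisfying a linear recurrence with complex
coefficients satisfies a linear recurrence of order at most k with rational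
coefficients. -/
theorem int_recurrence_rational_coeffs (k : ℕ) (b : ℕ → ℤ) (a : Fin k → ℂ)
    (h : ∀ n : ℕ, (b (n + k) : ℂ) = ∑ j : Fin k, a j * (b (n + (j : ℕ)) : ℂ)) :
    ∃ k' : ℕ, k' ≤ k ∧ ∃ a' : Fin k' → ℚ,
      ∀ n : ℕ, (b (n + k') : ℚ) = ∑ j : Fin k', a' j * (b (n + (j : ℕ)) : ℚ) := by
  -- Choose a ℚ-linear retraction `P : ℂ → ℚ` of the inclusion ℚ → ℂ.
  obtain ⟨P, hP⟩ := (Algebra.linearMap ℚ ℂ).exists_leftInverse_of_injective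
    (LinearMap.ker_eq_bot.mpr (algebraMap ℚ ℂ).injective)
  have hPq : ∀ q : ℚ, P ((q : ℂ)) = q := fun q => by
    have := LinearMap.congr_fun hP q
    simpa [Algebra.linearMap_apply] using this
  refine ⟨k, le_refl k, fun j => P (a j), fun n => ?_⟩
  have h1 : ((b (n + k) : ℚ) : ℂ) = ∑ j : Fin k, a j * ((b (n + (j : ℕ)) : ℚ) : ℂ) := by
    push_cast
    exact_mod_cast h n
  calc ((b (n + k) : ℚ)) = P ((b (n + k) : ℚ) : ℂ) := (hPq _).symm
    _ = P (∑ j : Fin k, a j * ((b (n + (j : ℕ)) : ℚ) : ℂ)) := by rw [h1]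
    _ = ∑ j : Fin k, P (a j * ((b (n + (j : ℕ)) : ℚ) : ℂ)) := map_sum P _ _
    _ = ∑ j : Fin k, P (a j) * (b (n + (j : ℕ)) : ℚ) := by
        refine Finset.sum_congr rfl fun j _ => ?_
        have : a j * ((b (n + (j : ℕ)) : ℚ) : ℂ) = (b (n + (j : ℕ)) : ℚ) • a j := by
          rw [Rat.smul_def, mul_comm]
        rw [this, map_smul, smul_eq_mul, mul_comm]
end

section
/- Let l ≥ 1, let β_1, ..., β_l ∈ ℂ be distinct with |β_j| = 1, and let γ_1, ..., γ_l ∈ ℂ be nonzero. Define v(n) = Σ_{j=1}^l γ_j β_j^n. Then v(n) does not tend to 0 as n → ∞; in fact limsup_{n→∞} |v(n)| > 0. -/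
open Filter Finset

lemma cesaro_geom_zero {z : ℂ} (hz : ‖z‖ = 1) (hz1 : z ≠ 1) :
    Tendsto (fun N : ℕ => (N : ℝ)⁻¹ • ∑ n ∈ range N, z ^ n) atTop (nhds 0) := by
  have hbd : ∀ N : ℕ, ‖∑ n ∈ range N, z ^ n‖ ≤ 2 / ‖z - 1‖ := by
    intro N
    rw [geom_sum_eq hz1]
    rw [norm_div]
    gcongr
    calc ‖z ^ N - 1‖ ≤ ‖z ^ N‖ + ‖(1:ℂ)‖ := norm_sub_le _ _
      _ = 2 := by rw [norm_pow, hz]; norm_num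
  have h1 : Tendsto (fun N : ℕ => (N : ℝ)⁻¹ * (2 / ‖z - 1‖)) atTop (nhds 0) := by
    simpa using (tendsto_inv_atTop_nhds_zero_nat).mul_const (2 / ‖z - 1‖)
  apply squeeze_zero_norm _ h1
  intro N
  rw [norm_smul]
  simp only [norm_inv, Real.norm_natCast]
  gcongr
  exact hbd N

lemma cesaro_geom_one :
    Tendsto (fun N : ℕ => (N : ℝ)⁻¹ • ∑ n ∈ range N, (1:ℂ) ^ n) atTop (nhds 1) := by
  have : ∀ᶠ N : ℕ in atTop, (N : ℝ)⁻¹ • ∑ n ∈ range N, (1:ℂ) ^ n = 1 := by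
    filter_upwards [eventually_gt_atTop 0] with N hN
    have : (N : ℝ) ≠ 0 := Nat.cast_ne_zero.mpr hN.ne'
    field_simp
    simp only [one_pow, Finset.sum_const, Finset.card_range, nsmul_eq_mul, mul_one, Complex.real_smul, one_div, Complex.ofReal_inv, Complex.ofReal_natCast]
    exact inv_mul_cancel₀ (by exact_mod_cast hN.ne')
  exact tendsto_const_nhds.congr' (EventuallyEq.symm this)

/-- A nontrivial linear combination v(n) = Σ_j γ_j β_jⁿ of distinct unimodular
geometric sequences does not tend to 0; in fact limsup |v(n)| > 0. -/
theorem unimodular_power_sum_not_tendsto_zero (l : ℕ) (hl : 1 ≤ l)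
    (β γ : Fin l → ℂ) (hβinj : Function.Injective β)
    (hβmod : ∀ j, ‖β j‖ = 1) (hγ : ∀ j, γ j ≠ 0) :
    ¬ Tendsto (fun n : ℕ => ∑ j : Fin l, γ j * β j ^ n) atTop (nhds 0) ∧
      0 < atTop.limsup (fun n : ℕ => ‖∑ j : Fin l, γ j * β j ^ n‖) := by
  set v : ℕ → ℂ := fun n => ∑ j : Fin l, γ j * β j ^ n with hv
  have key : ¬ Tendsto v atTop (nhds 0) := by
    intro hT
    set k : Fin l := ⟨0, hl⟩
    set z : Fin l → ℂ := fun j => β j * (starRingEnd ℂ) (β k) with hzdef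
    have hzmod : ∀ j, ‖z j‖ = 1 := by
      intro j; simp [hzdef, map_mul, hβmod]
    have hzk : z k = 1 := by
      have := hβmod k
      rw [hzdef]
      simp only
      rw [Complex.mul_conj]
      rw [Complex.normSq_eq_norm_sq, this]
      norm_num
    have hzne : ∀ j, j ≠ k → z j ≠ 1 := by
      intro j hj h1
      apply hj; apply hβinj
      have hk : β k ≠ 0 := by
        intro h0; have := hβmod k; rw [h0] at this; simp at this
      have h1' : β j * (starRingEnd ℂ) (β k) = 1 := h1
      have : β j * ((starRingEnd ℂ) (β k) * β k) = β k := by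
        rw [← mul_assoc, h1', one_mul]
      rw [mul_comm ((starRingEnd ℂ) (β k)), Complex.mul_conj, Complex.normSq_eq_norm_sq, hβmod k] at this
      simpa using this
    -- f n = v n * conj(β k)^n
    set f : ℕ → ℂ := fun n => v n * ((starRingEnd ℂ) (β k)) ^ n with hf
    have hfT : Tendsto f atTop (nhds 0) := by
      apply squeeze_zero_norm _ (tendsto_zero_iff_norm_tendsto_zero.mp hT)
      intro n
      rw [hf]
      simp only [norm_mul, norm_pow, Complex.norm_conj, hβmod k,
        one_pow, mul_one, le_refl]
    have hces : Tendsto (fun N : ℕ => (N : ℝ)⁻¹ • ∑ n ∈ range N, f n) atTop (nhds 0) :=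
      hfT.cesaro_smul
    have hfn : ∀ n, f n = ∑ j : Fin l, γ j * z j ^ n := by
      intro n
      rw [hf]
      simp only [hv]
      rw [Finset.sum_mul]
      refine Finset.sum_congr rfl fun j _ => ?_
      have : z j = β j * (starRingEnd ℂ) (β k) := rfl
      rw [this, mul_pow]
      ring
    have hsum : ∀ N : ℕ, (N : ℝ)⁻¹ • ∑ n ∈ range N, f n
        = ∑ j : Fin l, γ j * ((N : ℝ)⁻¹ • ∑ n ∈ range N, z j ^ n) := by
      intro N
      simp only [hfn]
      rw [Finset.sum_comm, Finset.smul_sum]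
      refine Finset.sum_congr rfl fun j _ => ?_
      rw [← Finset.mul_sum, mul_smul_comm]
    -- limit of each term
    have hlim : Tendsto (fun N : ℕ => ∑ j : Fin l, γ j * ((N : ℝ)⁻¹ • ∑ n ∈ range N, z j ^ n))
        atTop (nhds (∑ j : Fin l, γ j * (if j = k then 1 else 0))) := by
      refine tendsto_finset_sum _ fun j _ => ?_
      by_cases hjk : j = k
      · have hzj : z j = 1 := by rw [hjk, hzk]
        rw [if_pos hjk]
        have h1 : Tendsto (fun N : ℕ => (N : ℝ)⁻¹ • ∑ n ∈ range N, z j ^ n)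
            atTop (nhds 1) := by
          simp only [hzj]; exact cesaro_geom_one
        exact h1.const_mul _
      · simp only [if_neg hjk]
        exact ((cesaro_geom_zero (hzmod j) (hzne j hjk)).const_mul (γ j)).congr (fun N => rfl)
    have heq : (∑ j : Fin l, γ j * (if j = k then 1 else 0)) = γ k := by
      simp [Finset.sum_ite_eq', mul_comm]
    rw [heq] at hlim
    have : γ k = 0 := by
      have h2 : Tendsto (fun N : ℕ => ∑ j : Fin l, γ j * ((N : ℝ)⁻¹ • ∑ n ∈ range N, z j ^ n))
          atTop (nhds 0) := by
        refine hces.congr fun N => hsum N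
      exact tendsto_nhds_unique hlim h2
    exact hγ k this
  refine ⟨key, ?_⟩
  -- limsup part
  set g : ℕ → ℝ := fun n => ‖v n‖ with hg
  have hgnn : ∀ n, 0 ≤ g n := fun n => norm_nonneg _
  have hbd : ∀ n, g n ≤ ∑ j : Fin l, ‖γ j‖ := by
    intro n
    refine le_trans (norm_sum_le _ _ ) ?_
    refine Finset.sum_le_sum fun j _ => ?_
    rw [norm_mul, norm_pow, hβmod, one_pow, mul_one]
  have hbdd : IsBoundedUnder (· ≤ ·) atTop g :=
    isBoundedUnder_of ⟨∑ j : Fin l, ‖γ j‖, fun n => hbd n⟩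
  have hcobdd : IsBoundedUnder (· ≥ ·) atTop g :=
    isBoundedUnder_of ⟨0, fun n => hgnn n⟩
  by_contra hLpos
  push_neg at hLpos
  have h0le : 0 ≤ atTop.limsup g :=
    le_limsup_of_frequently_le (Frequently.of_forall fun n => hgnn n) hbdd
  have hL0 : atTop.limsup g = 0 := le_antisymm hLpos h0le
  have hliminf : 0 ≤ atTop.liminf g :=
    le_liminf_of_le hbdd.isCoboundedUnder_ge (Eventually.of_forall fun n => hgnn n)
  have hten : Tendsto g atTop (nhds 0) :=
    tendsto_of_le_liminf_of_limsup_le hliminf (le_of_eq hL0) hbdd hcobdd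
  exact key (tendsto_zero_iff_norm_tendsto_zero.mpr hten)
end

section
/- Suppose a_0, ..., a_{k-1} ∈ ℚ and a_k = −1 are mutually coprime integers after clearing denominators, with at least one a_l odd. Then for sufficiently large n such that n+l is the unique power of 2 in {n, n+1, ..., n+k}, the sum Σ_{j=0}^k a_j C_{n+j} is odd, hence nonzero. -/
open Finset


lemma sym_sum_zmod2 (n : ℕ) (f : ℕ → ZMod 2) (hf : ∀ i ≤ n, f (n - i) = f i) :
    ∑ i ∈ range (n + 1), f i = if 2 ∣ n then f (n / 2) else 0 := by
  by_cases hpar : 2 ∣ n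
  · simp only [hpar, if_true]
    have hmem : n / 2 ∈ range (n + 1) := by
      simp [Nat.lt_succ_iff]; exact Nat.div_le_self n 2
    rw [← Finset.add_sum_erase _ f hmem]
    have h0 : ∑ i ∈ (range (n + 1)).erase (n / 2), f i = 0 := by
      apply Finset.sum_involution (fun i _ => n - i)
      · intro i hi
        simp only [Finset.mem_erase, Finset.mem_range, Nat.lt_succ_iff] at hi
        rw [hf i hi.2]; exact CharTwo.add_self_eq_zero _
      · intro i hi _
        simp only [Finset.mem_erase, Finset.mem_range, Nat.lt_succ_iff] at hi
        intro h; exact hi.1 (by omega)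
      · intro i hi
        simp only [Finset.mem_erase, Finset.mem_range, Nat.lt_succ_iff] at hi ⊢
        omega
      · intro i hi
        simp only [Finset.mem_erase, Finset.mem_range, Nat.lt_succ_iff] at hi
        omega
    rw [h0, add_zero]
  · simp only [hpar, if_false]
    apply Finset.sum_involution (fun i _ => n - i)
    · intro i hi
      simp only [Finset.mem_range, Nat.lt_succ_iff] at hi
      rw [hf i hi]; exact CharTwo.add_self_eq_zero _
    · intro i hi _
      simp only [Finset.mem_range, Nat.lt_succ_iff] at hi
      omega
    · intro i hi
      simp only [Finset.mem_range, Nat.lt_succ_iff] at hi ⊢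
      omega
    · intro i hi
      simp only [Finset.mem_range, Nat.lt_succ_iff] at hi
      omega

lemma odd_iff_zmod2 (m : ℕ) : Odd m ↔ (m : ZMod 2) = 1 := by
  rw [Nat.odd_iff, ← ZMod.natCast_mod m 2]
  rcases Nat.mod_two_eq_zero_or_one m with h0 | h0 <;> rw [h0] <;> simp

lemma catalan_odd_iff : ∀ m : ℕ, Odd (catalan m) ↔ ∃ s : ℕ, m + 1 = 2 ^ s := by
  intro m
  induction m using Nat.strong_induction_on with
  | _ m ih =>
    match m with
    | 0 => simpa [catalan_zero] using ⟨0, rfl⟩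
    | Nat.succ n =>
      have hsq : ∀ x : ZMod 2, x * x = x := by decide
      have key : (catalan (n + 1) : ZMod 2)
          = if 2 ∣ n then (catalan (n / 2) : ZMod 2) else 0 := by
        have hsum : (catalan (n + 1) : ZMod 2)
            = ∑ i ∈ range (n + 1), ((catalan i : ZMod 2) * (catalan (n - i) : ZMod 2)) := by
          rw [catalan_succ,
            Fin.sum_univ_eq_sum_range (fun i => catalan i * catalan (n - i))]
          push_cast
          rfl
        rw [hsum, sym_sum_zmod2 n (fun i => (catalan i : ZMod 2) * (catalan (n - i) : ZMod 2))]
        · by_cases h : 2 ∣ n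
          · have h2 : n - n / 2 = n / 2 := by omega
            simp only [h, if_true, h2, hsq]
          · simp [h]
        · intro i hi
          have : n - (n - i) = i := by omega
          rw [this, mul_comm]
      constructor
      · intro hodd
        rw [odd_iff_zmod2] at hodd
        rw [hodd] at key
        by_cases h : 2 ∣ n
        · rw [if_pos h] at key
          have : Odd (catalan (n / 2)) := (odd_iff_zmod2 _).2 key.symm
          obtain ⟨s, hs⟩ := (ih (n / 2) (by omega)).1 this
          exact ⟨s + 1, by omega⟩
        · rw [if_neg h] at key; exact absurd key one_ne_zero
      · rintro ⟨s, hs⟩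
        have hs1 : 1 ≤ s := by
          rcases Nat.eq_zero_or_pos s with h | h
          · subst h; omega
          · exact h
        have h2 : 2 ∣ n := by
          have : n + 2 = 2 * 2 ^ (s - 1) := by
            rw [← pow_succ']
            have : s - 1 + 1 = s := by omega
            rw [this]; omega
          omega
        have hhalf : n / 2 + 1 = 2 ^ (s - 1) := by
          have : n + 2 = 2 * 2 ^ (s - 1) := by
            rw [← pow_succ']
            have : s - 1 + 1 = s := by omega
            rw [this]; omega
          omega
        have : Odd (catalan (n / 2)) := (ih (n / 2) (by omega)).2 ⟨s - 1, hhalf⟩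
        rw [odd_iff_zmod2] at this ⊢
        rw [key, if_pos h2, this]

lemma int_odd_iff_zmod2 (x : ℤ) : Odd x ↔ (x : ZMod 2) = 1 := by
  have h2 : ((2 : ℤ) : ZMod 2) = 0 := by decide
  constructor
  · rintro ⟨y, rfl⟩
    push_cast [h2]
    rw [show (2 : ZMod 2) = 0 from rfl]
    ring
  · intro h
    rw [← Int.not_even_iff_odd]
    rintro ⟨y, rfl⟩
    rw [show y + y = 2 * y by ring] at h
    push_cast [h2] at h
    rw [show (2 : ZMod 2) = 0 from rfl] at h
    simp at h

/-- Suppose a_0, ..., a_k are integers (the cleared-denominator coefficients)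
with a_l odd for some l ≤ k. If n ≥ 1 is such that n + l is a power of 2 and
no other element of {n, ..., n+k} is a power of 2, then Σ_{j=0}^k a_j C_{n+j}
is odd (1-based Catalan numbers C_m = catalan (m-1)), hence nonzero. -/
theorem sum_catalan_odd (k l : ℕ) (hl : l ≤ k) (a : ℕ → ℤ) (hal : Odd (a l))
    (n : ℕ) (hn : 1 ≤ n) (hpow : ∃ m : ℕ, n + l = 2 ^ m)
    (hother : ∀ j : ℕ, j ≤ k → j ≠ l → ¬ ∃ m : ℕ, n + j = 2 ^ m) :
    Odd (∑ j ∈ Finset.range (k + 1), a j * (catalan (n + j - 1) : ℤ)) ∧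
      ∑ j ∈ Finset.range (k + 1), a j * (catalan (n + j - 1) : ℤ) ≠ 0 := by
  have hodd : Odd (∑ j ∈ Finset.range (k + 1), a j * (catalan (n + j - 1) : ℤ)) := by
    rw [int_odd_iff_zmod2]
    push_cast
    rw [Finset.sum_eq_single l]
    · have h1 : (a l : ZMod 2) = 1 := by
        rw [← int_odd_iff_zmod2]; exact hal
      have h2 : ((catalan (n + l - 1) : ℕ) : ZMod 2) = 1 := by
        rw [← odd_iff_zmod2, catalan_odd_iff]
        obtain ⟨m, hm⟩ := hpow
        exact ⟨m, by omega⟩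
      rw [h1, h2, mul_one]
    · intro j hj hjl
      have hje : Even (catalan (n + j - 1)) := by
        rw [← Nat.not_odd_iff_even, catalan_odd_iff]
        rintro ⟨m, hm⟩
        exact hother j (by simp [Nat.lt_succ_iff] at hj; omega) hjl ⟨m, by omega⟩
      have : ((catalan (n + j - 1) : ℕ) : ZMod 2) = 0 := by
        rw [← ZMod.natCast_mod, Nat.even_iff.1 hje]; simp
      rw [this, mul_zero]
    · intro h; exact absurd (Finset.mem_range.2 (by omega)) h
  refine ⟨hodd, fun h0 => ?_⟩
  rw [h0] at hodd
  exact (Int.not_odd_iff_even.2 Even.zero) hodd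
end
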